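/- Let X be a proper geodesic metric space with basepoint o, let x ∈ ∂X_o^N, and let α:[0,∞)→X be an N'-Morse geodesic ray with α(∞)=x. Set S = δ_{N'} and define α' = α|_{[S,∞)}. Then F_o^{N''}(α') ⊆ H_o^{N''}(α) for any Morse gauge N''. -/

import Mathlib

set_option autoImplicit false

universe u v

open Set Metric

/-- A map `γ : ℝ → X` is a (unit–speed) geodesic on the interval `[s, t]`. -/
def IsGeodesicOn {X : Type*} [MetricSpace X] (γ : ℝ → X) (s t : ℝ) : Prop :=
  ∀ u ∈ Set.Icc s t, ∀ v ∈ Set.Icc s t, dist (γ u) (γ v) = |u - v|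

/-- A geodesic ray defined on the domain `[a, ∞)`. -/
def IsGeodesicRay {X : Type*} [MetricSpace X] (a : ℝ) (α : ℝ → X) : Prop :=
  ∀ u ∈ Set.Ici a, ∀ v ∈ Set.Ici a, dist (α u) (α v) = |u - v|

/-- A bi-infinite geodesic line. -/
def IsGeodesicLine {X : Type*} [MetricSpace X] (γ : ℝ → X) : Prop :=
  ∀ u v : ℝ, dist (γ u) (γ v) = |u - v|

/-- `X` is a geodesic metric space: any two points are joined by a geodesic segment. -/
def IsGeodesicSpace (X : Type*) [MetricSpace X] : Prop :=
  ∀ x y : X, ∃ γ : ℝ → X, IsGeodesicOn γ 0 (dist x y) ∧ γ 0 = x ∧ γ (dist x y) = y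

/-- A `(K, C)`-quasi-geodesic defined on the interval `[s, t]`. -/
def IsQuasiGeodesicOn {X : Type*} [MetricSpace X] (K C : ℝ) (φ : ℝ → X) (s t : ℝ) : Prop :=
  ∀ u ∈ Set.Icc s t, ∀ v ∈ Set.Icc s t,
    (1 / K) * |u - v| - C ≤ dist (φ u) (φ v) ∧ dist (φ u) (φ v) ≤ K * |u - v| + C

/-- A Morse gauge: a function `N : [1,∞) × [0,∞) → [0,∞)`. -/
abbrev MorseGauge : Type :=
  {N : ℝ → ℝ → ℝ // ∀ K C : ℝ, 1 ≤ K → 0 ≤ C → 0 ≤ N K C}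

/-- A subset `S ⊆ X` (e.g. the image of a (quasi-)geodesic) is `N`-Morse if every
`(K, C)`-quasi-geodesic with endpoints on `S` stays in the `N (K, C)`-neighborhood of `S`. -/
def IsMorseSet {X : Type*} [MetricSpace X] (N : MorseGauge) (S : Set X) : Prop :=
  ∀ K C : ℝ, 1 ≤ K → 0 ≤ C → ∀ (φ : ℝ → X) (s t : ℝ), s ≤ t →
    IsQuasiGeodesicOn K C φ s t → φ s ∈ S → φ t ∈ S →
    ∀ u ∈ Set.Icc s t, ∃ p ∈ S, dist (φ u) p ≤ N.1 K C

/-- The constant `δ_N = max {4N(1, 2N(5,0)) + 2N(5,0), 8N(3,0)} + N(5,0)`. -/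
noncomputable def deltaGauge (N : MorseGauge) : ℝ :=
  max (4 * N.1 1 (2 * N.1 5 0) + 2 * N.1 5 0) (8 * N.1 3 0) + N.1 5 0

/-- Two rays `α, β` `K`-asymptotically fellow-travel: `α ∼_K β`. -/
def FellowTravel {X : Type*} [MetricSpace X] (K : ℝ) (α β : ℝ → X) : Prop :=
  ∃ T : ℝ, ∀ t ≥ T, dist (α t) (β t) ≤ K

/-- Two subsets of `X` are at finite Hausdorff distance from each other. -/
def FinHausdorff {X : Type*} [MetricSpace X] (S T : Set X) : Prop :=
  ∃ C : ℝ, (∀ s ∈ S, ∃ t ∈ T, dist s t ≤ C) ∧ (∀ t ∈ T, ∃ s ∈ S, dist s t ≤ C)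

/-- The closest point projection `π_S (x)` of `x` to a subset `S`. -/
noncomputable def nearestPoints {X : Type*} [MetricSpace X] (S : Set X) (x : X) : Set X :=
  {s ∈ S | dist x s = Metric.infDist x S}

/-- The Morse stratum `X_o^N`: points `x` joined to `o` by an `N`-Morse geodesic. -/
def InMorseStratum {X : Type*} [MetricSpace X] (o : X) (N : MorseGauge) (x : X) : Prop :=
  ∃ γ : ℝ → X, IsGeodesicOn γ 0 (dist o x) ∧ γ 0 = o ∧ γ (dist o x) = x ∧
    IsMorseSet N (γ '' Set.Icc 0 (dist o x))

/-- The space of `N`-Morse geodesic rays emanating from `o`, with the topology of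
pointwise (equivalently, since rays are `1`-Lipschitz, uniform-on-compact) convergence. -/
abbrev MorseRaysFrom {X : Type*} [MetricSpace X] (o : X) (N : MorseGauge) : Type _ :=
  {α : ℝ → X // IsGeodesicRay 0 α ∧ α 0 = o ∧ IsMorseSet N (α '' Set.Ici 0)}

/-- Two Morse rays from `o` are identified when they are at finite Hausdorff distance. -/
def AsympRel {X : Type*} [MetricSpace X] (o : X)
    (p q : Σ N : MorseGauge, MorseRaysFrom o N) : Prop :=
  FinHausdorff (p.2.1 '' Set.Ici 0) (q.2.1 '' Set.Ici 0)

/-- The Morse boundary `∂X_o`: the direct limit over all Morse gauges `N` of the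
boundaries `∂X_o^N` of the strata, realized as the quotient of the disjoint union of
the ray spaces; it carries the direct limit (quotient) topology. -/
abbrev MorseBoundary {X : Type*} [MetricSpace X] (o : X) : Type _ :=
  Quot (AsympRel o)

/-- The boundary point `α(∞) ∈ ∂X_o` determined by a Morse geodesic ray from `o`. -/
def boundaryPoint {X : Type*} [MetricSpace X] (o : X) (N : MorseGauge)
    (α : MorseRaysFrom o N) : MorseBoundary o :=
  Quot.mk _ ⟨N, α⟩

/-- Membership `x ∈ ∂X_o^N` for a point of the Morse boundary. -/
def InStratumBoundary {X : Type*} [MetricSpace X] (o : X) (N : MorseGauge)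
    (x : MorseBoundary o) : Prop :=
  ∃ α : MorseRaysFrom o N, boundaryPoint o N α = x

/-- A geodesic ray `α : [a,∞) → X` converges to (represents) the point `x ∈ ∂X_o`,
written `α(∞) = x`: it is at finite Hausdorff distance from a Morse ray from `o`
representing `x`. -/
def RayConvergesTo {X : Type*} [MetricSpace X] (o : X) (a : ℝ) (α : ℝ → X)
    (x : MorseBoundary o) : Prop :=
  ∃ (N : MorseGauge) (β : MorseRaysFrom o N), boundaryPoint o N β = x ∧
    FinHausdorff (α '' Set.Ici a) (β.1 '' Set.Ici 0)

/-- The limit set `ΛA ⊆ ∂X_o` of `A ⊆ X`: points `x` such that, for some Morse gauge `N`,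
there is a sequence in `A ∩ X_o^N` whose geodesics from `o` converge uniformly on compact
sets to a geodesic ray representing `x`. -/
def limitSet {X : Type*} [MetricSpace X] (o : X) (A : Set X) : Set (MorseBoundary o) :=
  {x | ∃ (N : MorseGauge) (p : ℕ → X) (γ : ℕ → ℝ → X) (α : ℝ → X),
      (∀ k, p k ∈ A ∧ InMorseStratum o N (p k)) ∧
      (∀ k, IsGeodesicOn (γ k) 0 (dist o (p k)) ∧ γ k 0 = o ∧ γ k (dist o (p k)) = p k) ∧
      IsGeodesicRay 0 α ∧ α 0 = o ∧
      (∀ R > (0:ℝ), ∀ ε > (0:ℝ), ∃ K : ℕ, ∀ k ≥ K, R ≤ dist o (p k) ∧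
        ∀ t ∈ Set.Icc (0:ℝ) R, dist (γ k t) (α t) ≤ ε) ∧
      RayConvergesTo o 0 α x}

/-- The `N`-Morse horoball based at `o` around the geodesic ray `α : [a,∞) → X`,
where `M` is the Morse gauge of `α` (used via the constant `δ_M`). -/
def morseHoroball {X : Type*} [MetricSpace X] (o : X) (N M : MorseGauge) (a : ℝ)
    (α : ℝ → X) : Set X :=
  {x | InMorseStratum o N x ∧ ∃ b ≥ a, ∃ β : ℝ → X,
    IsGeodesicRay b β ∧ β b = x ∧ FellowTravel (deltaGauge M) α β}

/-- The `N`-Morse funnel based at `o` around the geodesic ray `α : [a,∞) → X`. -/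
noncomputable def morseFunnel {X : Type*} [MetricSpace X] (o : X) (N : MorseGauge) (a : ℝ)
    (α : ℝ → X) : Set X :=
  {x | InMorseStratum o N x ∧
    Metric.infDist x (α '' Set.Ici a) ≤
      Metric.infDist (α a) (nearestPoints (α '' Set.Ici a) x)}

/-- `x ∈ ∂X_o` is a Morse conical limit point of `A ⊆ X`: there is `K > 0` such that the
`K`-neighborhood of every Morse geodesic ray representing `x` meets `A`. -/
def IsMorseConicalLimitPoint {X : Type*} [MetricSpace X] (o : X) (A : Set X)
    (x : MorseBoundary o) : Prop :=
  ∃ K > (0:ℝ), ∀ (a : ℝ) (α : ℝ → X), IsGeodesicRay a α →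
    (∃ M : MorseGauge, IsMorseSet M (α '' Set.Ici a)) → RayConvergesTo o a α x →
    ∃ y ∈ A, Metric.infDist y (α '' Set.Ici a) ≤ K

/-- `x ∈ ∂X_o` is a Morse horospherical limit point of `A ⊆ X`: for every Morse geodesic
ray `α` representing `x` (with Morse gauge `M`), some Morse horoball about `α` meets `A`. -/
def IsMorseHoroLimitPoint {X : Type*} [MetricSpace X] (o : X) (A : Set X)
    (x : MorseBoundary o) : Prop :=
  ∀ (a : ℝ) (α : ℝ → X) (M : MorseGauge), IsGeodesicRay a α →
    IsMorseSet M (α '' Set.Ici a) → RayConvergesTo o a α x →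
    ∃ N : MorseGauge, (morseHoroball o N M a α ∩ A).Nonempty

/-- `x ∈ ∂X_o` is a Morse funnelled limit point of `A ⊆ X`: for every Morse geodesic ray
`α` representing `x`, some Morse funnel about `α` meets `A`. -/
def IsMorseFunnelLimitPoint {X : Type*} [MetricSpace X] (o : X) (A : Set X)
    (x : MorseBoundary o) : Prop :=
  ∀ (a : ℝ) (α : ℝ → X), IsGeodesicRay a α →
    (∃ M : MorseGauge, IsMorseSet M (α '' Set.Ici a)) → RayConvergesTo o a α x →
    ∃ N : MorseGauge, (morseFunnel o N a α ∩ A).Nonempty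

/-- The weak convex hull `WCH(B)` of a set `B ⊆ ∂X_o` of boundary points: the union of all
bi-infinite geodesics of `X` both of whose endpoints at infinity lie in `B`. -/
def weakConvexHull {X : Type*} [MetricSpace X] (o : X) (B : Set (MorseBoundary o)) :
    Set X :=
  {y | ∃ γ : ℝ → X, IsGeodesicLine γ ∧
    (∃ x₁ ∈ B, RayConvergesTo o 0 γ x₁) ∧
    (∃ x₂ ∈ B, RayConvergesTo o 0 (fun t => γ (-t)) x₂) ∧
    ∃ t : ℝ, γ t = y}

/-- The action of `H` on `X` is by isometries. -/
def IsIsometricAction (H X : Type*) [Group H] [MulAction H X] [MetricSpace X] : Prop :=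
  ∀ (h : H) (x y : X), dist (h • x) (h • y) = dist x y

/-- The action of `H` on `X` is (metrically) proper. -/
def IsProperAction (H : Type*) {X : Type*} [Group H] [MulAction H X] [MetricSpace X]
    (o : X) : Prop :=
  ∀ R : ℝ, {h : H | dist (h • o) o ≤ R}.Finite

/-- The orbit `H·o` of the basepoint. -/
def orbitSet (H : Type*) {X : Type*} [Group H] [MulAction H X] (o : X) : Set X :=
  Set.range fun h : H => h • o

/-- The action of `H` on the subset `Y ⊆ X` is cobounded: `Y` lies in a bounded
neighborhood of some `H`-orbit in `Y`. -/
def IsCoboundedActionOn (H : Type*) {X : Type*} [Group H] [MulAction H X] [MetricSpace X]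
    (Y : Set X) : Prop :=
  Y = ∅ ∨ ∃ p ∈ Y, ∃ R : ℝ, ∀ y ∈ Y, ∃ h : H, dist y (h • p) ≤ R

/-- The word metric on `H` associated to a generating set `S`. -/
noncomputable def wordDist {H : Type*} [Group H] (S : Set H) (g h : H) : ℕ :=
  sInf {n : ℕ | ∃ w : List H, (∀ u ∈ w, u ∈ S ∨ u⁻¹ ∈ S) ∧ w.length = n ∧ w.prod = g⁻¹ * h}

/-- The orbit map `h ↦ h • o` is a stable embedding: it is a quasi-isometric embedding of
`H` (with a word metric coming from a finite generating set) into `X`, and there is a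
Morse gauge `N` such that any two points of the orbit are joined by an `N`-Morse
quasi-geodesic of `X`. -/
def OrbitMapStable (H : Type*) {X : Type*} [Group H] [MulAction H X] [MetricSpace X]
    (o : X) : Prop :=
  ∃ S : Finset H, Subgroup.closure (S : Set H) = ⊤ ∧
    (∃ lam : ℝ, 1 ≤ lam ∧ ∀ g h : H,
      (wordDist (S : Set H) g h : ℝ) / lam - lam ≤ dist (g • o) (h • o) ∧
      dist (g • o) (h • o) ≤ lam * (wordDist (S : Set H) g h : ℝ) + lam) ∧
    ∃ N : MorseGauge, ∀ g h : H, ∃ (K C s t : ℝ) (φ : ℝ → X),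
      1 ≤ K ∧ 0 ≤ C ∧ s ≤ t ∧ IsQuasiGeodesicOn K C φ s t ∧ φ s = g • o ∧ φ t = h • o ∧
      IsMorseSet N (φ '' Set.Icc s t)

/-- `H` acts boundary convex cocompactly on `X` (with respect to the basepoint `o`):
the action is proper, the limit set `ΛH` is nonempty and compact, and the action of `H`
on the weak convex hull of `ΛH` is cobounded. -/
def BoundaryConvexCocompact (H : Type*) {X : Type*} [Group H] [MulAction H X]
    [MetricSpace X] (o : X) : Prop :=
  IsProperAction H o ∧ (limitSet o (orbitSet H o)).Nonempty ∧
    IsCompact (limitSet o (orbitSet H o)) ∧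
    IsCoboundedActionOn H (weakConvexHull o (limitSet o (orbitSet H o)))

/-- `X` is `δ`-hyperbolic (four-point condition). -/
def IsGromovHyperbolic (X : Type*) [MetricSpace X] (δ : ℝ) : Prop :=
  ∀ x y z w : X, dist x y + dist z w ≤ max (dist x z + dist y w) (dist x w + dist y z) + 2 * δ

/-- The horoball `H(α)` about a geodesic ray `α : [a,∞) → X` in a `δ`-hyperbolic space:
the union of the images of all geodesic rays `β : [b,∞) → X` with `β ∼_{6δ} α` and
`b ≥ a`. -/
def horoball {X : Type*} [MetricSpace X] (δ a : ℝ) (α : ℝ → X) : Set X :=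
  {x | ∃ b ≥ a, ∃ β : ℝ → X, IsGeodesicRay b β ∧ FellowTravel (6 * δ) α β ∧
    ∃ t ≥ b, β t = x}

/-- The funnel `F(α)` about a geodesic ray `α : [a,∞) → X`:
`F(α) = {x : d(x, α) ≤ d(π_α(x), α(a))}`. -/
noncomputable def funnel {X : Type*} [MetricSpace X] (a : ℝ) (α : ℝ → X) : Set X :=
  {x | Metric.infDist x (α '' Set.Ici a) ≤
    Metric.infDist (α a) (nearestPoints (α '' Set.Ici a) x)}

lemma aux_abs_min_sub (a b c : ℝ) : |min a c - min b c| ≤ |a - b| := by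
  rcases le_total a c with h1 | h1 <;> rcases le_total b c with h2 | h2
  · rw [min_eq_left h1, min_eq_left h2]
  · rw [min_eq_left h1, min_eq_right h2, abs_sub_le_iff]
    have h3 : b - a ≤ |a - b| := by rw [abs_sub_comm]; exact le_abs_self _
    have h4 : (0:ℝ) ≤ |a - b| := abs_nonneg _
    constructor <;> linarith
  · rw [min_eq_right h1, min_eq_left h2, abs_sub_le_iff]
    have h3 : a - b ≤ |a - b| := le_abs_self _
    have h4 : (0:ℝ) ≤ |a - b| := abs_nonneg _
    constructor <;> linarith
  · rw [min_eq_right h1, min_eq_right h2]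
    simp [abs_nonneg]

lemma aux_abs_max_sub (a b : ℝ) : |max 0 a - max 0 b| ≤ |a - b| := by
  rcases le_total (0:ℝ) a with h1 | h1 <;> rcases le_total (0:ℝ) b with h2 | h2
  · rw [max_eq_right h1, max_eq_right h2]
  · rw [max_eq_right h1, max_eq_left h2, abs_sub_le_iff]
    have h3 : a - b ≤ |a - b| := le_abs_self _
    have h4 : (0:ℝ) ≤ |a - b| := abs_nonneg _
    constructor <;> linarith
  · rw [max_eq_left h1, max_eq_right h2, abs_sub_le_iff]
    have h3 : b - a ≤ |a - b| := by rw [abs_sub_comm]; exact le_abs_self _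
    have h4 : (0:ℝ) ≤ |a - b| := abs_nonneg _
    constructor <;> linarith
  · rw [max_eq_left h1, max_eq_left h2]
    simp [abs_nonneg]

lemma aux_clamp_lip (D u v : ℝ) :
    |max 0 (min u D) - max 0 (min v D)| ≤ |u - v| :=
  (aux_abs_max_sub _ _).trans (aux_abs_min_sub _ _ _)

lemma rayImage_isClosed {X : Type u} [MetricSpace X] {a : ℝ} {α : ℝ → X}
    (hα : IsGeodesicRay a α) : IsClosed (α '' Set.Ici a) := by
  apply IsSeqClosed.isClosed
  intro ys y hmem htend
  choose t ht hαt using hmem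
  set T := a + dist (α a) y with hT
  have hTa : a ≤ T := le_add_of_nonneg_right dist_nonneg
  have htt : Filter.Tendsto t Filter.atTop (nhds T) := by
    have h1 : Filter.Tendsto (fun k => a + dist (α a) (ys k)) Filter.atTop (nhds T) :=
      tendsto_const_nhds.add (tendsto_const_nhds.dist htend)
    apply h1.congr
    intro k
    have : dist (α a) (ys k) = t k - a := by
      rw [← hαt k, hα a (Set.mem_Ici.mpr le_rfl) (t k) (ht k)]
      rw [abs_sub_comm, abs_of_nonneg (by have := Set.mem_Ici.mp (ht k); linarith : (0:ℝ) ≤ t k - a)]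
    rw [this]; ring
  have h1 : Filter.Tendsto (fun k => dist (ys k) (α T)) Filter.atTop (nhds (dist y (α T))) :=
    htend.dist tendsto_const_nhds
  have h2 : Filter.Tendsto (fun k => dist (ys k) (α T)) Filter.atTop (nhds 0) := by
    have h3 : Filter.Tendsto (fun k => |t k - T|) Filter.atTop (nhds 0) := by
      have := (htt.sub (tendsto_const_nhds (x := T))).abs
      simpa using this
    apply h3.congr
    intro k
    rw [← hαt k, hα (t k) (ht k) T (Set.mem_Ici.mpr hTa)]
  have : dist y (α T) = 0 := tendsto_nhds_unique h1 h2
  exact ⟨T, hTa, (dist_eq_zero.mp this).symm⟩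


lemma core_estimate {X : Type u} [MetricSpace X] [ProperSpace X]
    (hgeo : IsGeodesicSpace X) (N' : MorseGauge) (α : ℝ → X)
    (hα : IsGeodesicRay 0 α) (hαM : IsMorseSet N' (α '' Set.Ici 0))
    (x : X) (t₀ dd : ℝ) (ht₀0 : 0 ≤ t₀) (hdd0 : 0 ≤ dd) (hdd : dist x (α t₀) ≤ dd)
    (c nn : ℝ) (Γ : ℝ → X) (hΓ : IsGeodesicOn Γ c nn) (hΓc : Γ c = x) (hΓn : Γ nn = α nn)
    (hnn0 : 0 ≤ nn)
    (hc1 : t₀ - dd ≤ c) (hc2 : c ≤ t₀ + dd)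
    (v : ℝ) (hv1 : t₀ + dd + 3 * Metric.infDist x (α '' Set.Ici 0) ≤ v)
    (hv2 : v + N'.1 5 0 + dd + 1 ≤ nn) :
    dist (Γ v) (α v) ≤ 2 * N'.1 5 0 := by
  classical
  set A : Set X := α '' Set.Ici 0 with hAdef
  have hB0 : 0 ≤ N'.1 5 0 := N'.2 5 0 (by norm_num) le_rfl
  have hAcl : IsClosed A := rayImage_isClosed hα
  have hAne : A.Nonempty := ⟨α 0, 0, Set.mem_Ici.mpr le_rfl, rfl⟩
  set e' : ℝ := Metric.infDist x A with he'def
  have he'0 : 0 ≤ e' := Metric.infDist_nonneg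
  have hv0 : 0 ≤ v := by linarith
  have hvn : v ≤ nn := by linarith
  have hcv : c ≤ v := by linarith
  have hcn : c ≤ nn := by linarith
  -- continuity of Γ on [c, nn]
  have hΓcont : ContinuousOn Γ (Set.Icc c nn) := by
    apply (LipschitzOnWith.of_dist_le_mul (K := 1) ?_).continuousOn
    intro a ha b hb
    rw [hΓ a ha b hb, Real.dist_eq, NNReal.coe_one, one_mul]
  -- the penalized distance function and its minimizer
  set g : ℝ → ℝ := fun s => Metric.infDist (Γ s) A + s / 3 with hgdef
  have hgcont : ContinuousOn g (Set.Icc c nn) :=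
    ((Metric.continuous_infDist_pt A).comp_continuousOn hΓcont).add
      (continuousOn_id.div_const 3)
  obtain ⟨s₁, hs₁mem, hs₁min⟩ := isCompact_Icc.exists_isMinOn
    (Set.nonempty_Icc.mpr hcn) hgcont
  have hs₁c : c ≤ s₁ := hs₁mem.1
  have hs₁n : s₁ ≤ nn := hs₁mem.2
  set e₁ : ℝ := Metric.infDist (Γ s₁) A with he₁def
  have he₁0 : 0 ≤ e₁ := Metric.infDist_nonneg
  have hgb : g s₁ ≤ g c := isMinOn_iff.mp hs₁min c (Set.left_mem_Icc.mpr hcn)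
  have hs₁ub : s₁ ≤ c + 3 * e' := by
    have h1 : g c = e' + c / 3 := by simp only [hgdef]; rw [hΓc, ← he'def]
    have h2 : g s₁ = e₁ + s₁ / 3 := by simp only [hgdef]; rw [← he₁def]
    rw [h1, h2] at hgb
    linarith
  have hs₁v : s₁ ≤ v := by linarith
  have hgmin : ∀ w : ℝ, s₁ ≤ w → w ≤ nn → e₁ - (w - s₁) / 3 ≤ Metric.infDist (Γ w) A := by
    intro w hw1 hw2
    have h3 := isMinOn_iff.mp hs₁min w ⟨le_trans hs₁c hw1, hw2⟩
    simp only [hgdef] at h3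
    rw [← he₁def] at h3
    linarith
  -- nearest point q₁ on α to Γ s₁
  obtain ⟨q₁, hq₁A, hq₁d⟩ := hAcl.exists_infDist_eq_dist hAne (Γ s₁)
  have hq₁dist : dist q₁ (Γ s₁) = e₁ := by rw [dist_comm, ← hq₁d, he₁def]
  obtain ⟨σ, hσg, hσ0, hσe⟩ := hgeo q₁ (Γ s₁)
  rw [hq₁dist] at hσg hσe
  -- the concatenated path
  set Q : ℝ → X := fun t => if t < s₁ then σ (t - s₁ + e₁) else Γ t with hQdef
  have hQσ : ∀ t : ℝ, t < s₁ → Q t = σ (t - s₁ + e₁) := by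
    intro t ht; simp only [hQdef]; rw [if_pos ht]
  have hQΓ : ∀ t : ℝ, s₁ ≤ t → Q t = Γ t := by
    intro t ht; simp only [hQdef]; rw [if_neg (not_lt.mpr ht)]
  have hΓs₁w : ∀ w : ℝ, s₁ ≤ w → w ≤ nn → dist (Γ s₁) (Γ w) = w - s₁ := by
    intro w hw1 hw2
    rw [hΓ s₁ ⟨hs₁c, hs₁n⟩ w ⟨le_trans hs₁c hw1, hw2⟩, abs_sub_comm,
      abs_of_nonneg (by linarith)]
  -- the (5,0) quasi-geodesic estimate
  have key : ∀ u ∈ Set.Icc (s₁ - e₁) nn, ∀ w ∈ Set.Icc (s₁ - e₁) nn, u ≤ w →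
      1 / 5 * |u - w| - 0 ≤ dist (Q u) (Q w) ∧ dist (Q u) (Q w) ≤ 5 * |u - w| + 0 := by
    intro u hu w hw huw
    have habs : |u - w| = w - u := by rw [abs_sub_comm, abs_of_nonneg (by linarith)]
    by_cases hw1 : w < s₁
    · have hu1 : u < s₁ := lt_of_le_of_lt huw hw1
      rw [hQσ u hu1, hQσ w hw1,
        hσg _ ⟨by linarith [hu.1], by linarith⟩ _ ⟨by linarith [hw.1], by linarith⟩,
        show u - s₁ + e₁ - (w - s₁ + e₁) = u - w by ring]
      have := abs_nonneg (u - w)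
      constructor <;> linarith
    · by_cases hu1 : u < s₁
      · -- mixed case: u on the segment, w on Γ
        have hws : s₁ ≤ w := not_lt.mp hw1
        rw [hQσ u hu1, hQΓ w hws]
        set a : ℝ := s₁ - u with hadef
        set V : ℝ := w - s₁ with hVdef
        have ha1 : 0 < a := by simp only [hadef]; linarith
        have ha2 : a ≤ e₁ := by simp only [hadef]; linarith [hu.1]
        have hV0 : 0 ≤ V := by simp only [hVdef]; linarith
        have hmem1 : u - s₁ + e₁ ∈ Set.Icc 0 e₁ := ⟨by linarith [hu.1], by linarith⟩
        have hf1 : dist (σ (u - s₁ + e₁)) q₁ = e₁ - a := by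
          rw [← hσ0, hσg _ hmem1 0 ⟨le_rfl, he₁0⟩, sub_zero,
            show u - s₁ + e₁ = e₁ - a by rw [hadef]; ring]
          exact abs_of_nonneg (by linarith)
        have hf2 : dist (σ (u - s₁ + e₁)) (Γ s₁) = a := by
          rw [← hσe, hσg _ hmem1 e₁ ⟨he₁0, le_rfl⟩,
            show u - s₁ + e₁ - e₁ = -a by rw [hadef]; ring, abs_neg]
          exact abs_of_nonneg ha1.le
        have hf3 : dist (Γ s₁) (Γ w) = V := by rw [hΓs₁w w hws hw.2, hVdef]
        have habs2 : |u - w| = a + V := by rw [habs, hadef, hVdef]; ring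
        have hup : dist (σ (u - s₁ + e₁)) (Γ w) ≤ a + V := by
          calc dist (σ (u - s₁ + e₁)) (Γ w)
              ≤ dist (σ (u - s₁ + e₁)) (Γ s₁) + dist (Γ s₁) (Γ w) := dist_triangle _ _ _
            _ = a + V := by rw [hf2, hf3]
        constructor
        · rcases le_or_gt (3 * a / 2) V with hcase | hcase
          · have htr := dist_triangle (Γ s₁) (σ (u - s₁ + e₁)) (Γ w)
            rw [hf3, dist_comm (Γ s₁) (σ (u - s₁ + e₁)), hf2] at htr
            rw [habs2]
            linarith
          · have hew := hgmin w hws hw.2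
            rw [← hVdef] at hew
            have hzq : Metric.infDist (Γ w) A ≤ dist (Γ w) q₁ :=
              Metric.infDist_le_dist_of_mem hq₁A
            have htr := dist_triangle (Γ w) (σ (u - s₁ + e₁)) q₁
            rw [hf1, dist_comm (Γ w) (σ (u - s₁ + e₁))] at htr
            rw [habs2]
            linarith
        · rw [habs2]
          linarith
      · -- both on Γ
        have hus : s₁ ≤ u := not_lt.mp hu1
        have hws : s₁ ≤ w := le_trans hus huw
        rw [hQΓ u hus, hQΓ w hws,
          hΓ u ⟨le_trans hs₁c hus, hu.2⟩ w ⟨le_trans hs₁c hws, hw.2⟩]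
        have := abs_nonneg (u - w)
        constructor <;> linarith
  have hQG : IsQuasiGeodesicOn 5 0 Q (s₁ - e₁) nn := by
    intro u hu w hw
    rcases le_total u w with h | h
    · exact key u hu w hw h
    · obtain ⟨k1, k2⟩ := key w hw u hu h
      rw [dist_comm (Q w) (Q u), abs_sub_comm w u] at k1 k2
      exact ⟨k1, k2⟩
  -- endpoints lie on α
  have hQs : Q (s₁ - e₁) ∈ A := by
    rcases eq_or_lt_of_le he₁0 with h0 | hpos
    · have hEq : s₁ - e₁ = s₁ := by rw [← h0]; ring
      rw [hEq, hQΓ s₁ le_rfl]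
      have h1 : dist (Γ s₁) q₁ = 0 := by rw [← hq₁d, ← he₁def, ← h0]
      rw [dist_eq_zero.mp h1]
      exact hq₁A
    · have hlt : s₁ - e₁ < s₁ := by linarith
      rw [hQσ _ hlt, show s₁ - e₁ - s₁ + e₁ = 0 by ring, hσ0]
      exact hq₁A
  have hQtA : Q nn ∈ A := by
    rw [hQΓ nn hs₁n, hΓn, hAdef]
    exact ⟨nn, Set.mem_Ici.mpr hnn0, rfl⟩
  -- apply the Morse property with (K, C) = (5, 0)
  obtain ⟨pt, hptA, hptd⟩ := hαM 5 0 (by norm_num) le_rfl Q (s₁ - e₁) nn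
    (by linarith) hQG hQs hQtA v ⟨by linarith, hvn⟩
  rw [hQΓ v hs₁v] at hptd
  rw [hAdef] at hptA
  obtain ⟨uu, huu0', huupt⟩ := hptA
  have huu0 : 0 ≤ uu := Set.mem_Ici.mp huu0'
  rw [← huupt] at hptd
  -- synchronization with the far endpoint
  have hzn : dist (Γ v) (α nn) = nn - v := by
    rw [← hΓn, hΓ v ⟨hcv, hvn⟩ nn ⟨hcn, le_rfl⟩, abs_sub_comm, abs_of_nonneg (by linarith)]
  have hun : dist (α uu) (α nn) = |uu - nn| :=
    hα uu (Set.mem_Ici.mpr huu0) nn (Set.mem_Ici.mpr hnn0)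
  have hb1 : nn - v - N'.1 5 0 ≤ |uu - nn| := by
    have htr := dist_triangle (Γ v) (α uu) (α nn)
    rw [hzn, hun] at htr
    linarith
  have hb2 : |uu - nn| ≤ nn - v + N'.1 5 0 := by
    have htr := dist_triangle (α uu) (Γ v) (α nn)
    rw [hzn, hun, dist_comm (α uu) (Γ v)] at htr
    linarith
  rcases le_or_gt uu nn with hcase | hcase
  · have habs : |uu - nn| = nn - uu := by rw [abs_sub_comm, abs_of_nonneg (by linarith)]
    rw [habs] at hb1 hb2
    have h5 : dist (α uu) (α v) ≤ N'.1 5 0 := by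
      rw [hα uu (Set.mem_Ici.mpr huu0) v (Set.mem_Ici.mpr hv0), abs_le]
      constructor <;> linarith
    calc dist (Γ v) (α v) ≤ dist (Γ v) (α uu) + dist (α uu) (α v) := dist_triangle _ _ _
      _ ≤ 2 * N'.1 5 0 := by linarith
  · exfalso
    have habs : |uu - nn| = uu - nn := abs_of_nonneg (by linarith)
    rw [habs] at hb1
    have hxv : dist x (Γ v) = v - c := by
      rw [← hΓc, hΓ c ⟨le_rfl, hcn⟩ v ⟨hcv, hvn⟩, abs_sub_comm, abs_of_nonneg (by linarith)]
    have h6 : dist x (α uu) ≤ (v - c) + N'.1 5 0 := by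
      have htr := dist_triangle x (Γ v) (α uu)
      rw [hxv] at htr
      linarith
    have h7 : uu - t₀ - dd ≤ dist x (α uu) := by
      have htr := dist_triangle (α t₀) x (α uu)
      have hta : dist (α t₀) (α uu) = uu - t₀ := by
        rw [hα t₀ (Set.mem_Ici.mpr ht₀0) uu (Set.mem_Ici.mpr huu0), abs_sub_comm,
          abs_of_nonneg (by linarith)]
      have htx : dist (α t₀) x = dist x (α t₀) := dist_comm _ _
      rw [hta, htx] at htr
      linarith
    linarith


/-- Let `x ∈ ∂X_o^N` and let `α : [0,∞) → X` be an `N'`-Morse geodesic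
ray with `α(∞) = x`. With `S = δ_{N'}` and `α' = α|_{[S,∞)}`, we have
`F_o^{N''}(α') ⊆ H_o^{N''}(α)` for every Morse gauge `N''`. -/
theorem morseFunnel_subset_horoball (X : Type u) [MetricSpace X] [ProperSpace X]
    (hgeo : IsGeodesicSpace X) (o : X) (N N' N'' : MorseGauge) (α : ℝ → X)
    (hα : IsGeodesicRay 0 α) (hαM : IsMorseSet N' (α '' Set.Ici 0))
    (hx : ∃ β : MorseRaysFrom o N, FinHausdorff (α '' Set.Ici 0) (β.1 '' Set.Ici 0)) :
    morseFunnel o N'' (deltaGauge N') α ⊆ morseHoroball o N'' N' 0 α := by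
  intro x hxF
  obtain ⟨hstr, hfun⟩ := hxF
  classical
  refine ⟨hstr, ?_⟩
  have hB0 : 0 ≤ N'.1 5 0 := N'.2 5 0 (by norm_num) le_rfl
  have hC0 : 0 ≤ N'.1 3 0 := N'.2 3 0 (by norm_num) le_rfl
  have hN10 : 0 ≤ N'.1 1 (2 * N'.1 5 0) := N'.2 1 _ le_rfl (by linarith)
  have hS0 : 0 ≤ deltaGauge N' := by
    unfold deltaGauge
    have h := le_max_right (4 * N'.1 1 (2 * N'.1 5 0) + 2 * N'.1 5 0) (8 * N'.1 3 0)
    linarith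
  have h2B : 2 * N'.1 5 0 ≤ deltaGauge N' := by
    unfold deltaGauge
    have h := le_max_left (4 * N'.1 1 (2 * N'.1 5 0) + 2 * N'.1 5 0) (8 * N'.1 3 0)
    linarith
  -- nearest point of x on the restricted ray
  have hαS : IsGeodesicRay (deltaGauge N') α := fun u hu v hv =>
    hα u (Set.mem_Ici.mpr (le_trans hS0 (Set.mem_Ici.mp hu))) v
      (Set.mem_Ici.mpr (le_trans hS0 (Set.mem_Ici.mp hv)))
  have hAScl : IsClosed (α '' Set.Ici (deltaGauge N')) := rayImage_isClosed hαS
  obtain ⟨p, hpAS, hpd⟩ := hAScl.exists_infDist_eq_dist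
    ⟨α (deltaGauge N'), ⟨deltaGauge N', Set.mem_Ici.mpr le_rfl, rfl⟩⟩ x
  obtain ⟨t₀, ht₀S', hpt₀⟩ := hpAS
  have ht₀S : deltaGauge N' ≤ t₀ := Set.mem_Ici.mp ht₀S'
  have ht₀0 : 0 ≤ t₀ := le_trans hS0 ht₀S
  have hd0 : 0 ≤ dist x p := dist_nonneg
  have hd_le : dist x p ≤ t₀ - deltaGauge N' := by
    have hpmem : p ∈ nearestPoints (α '' Set.Ici (deltaGauge N')) x :=
      ⟨⟨t₀, ht₀S', hpt₀⟩, hpd.symm⟩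
    have h1 : Metric.infDist (α (deltaGauge N')) (nearestPoints (α '' Set.Ici (deltaGauge N')) x)
        ≤ dist (α (deltaGauge N')) p := Metric.infDist_le_dist_of_mem hpmem
    have h2 : dist (α (deltaGauge N')) p = t₀ - deltaGauge N' := by
      rw [← hpt₀, hα (deltaGauge N') (Set.mem_Ici.mpr hS0) t₀ (Set.mem_Ici.mpr ht₀0),
        abs_sub_comm, abs_of_nonneg (by linarith)]
    have h3 := hfun
    rw [hpd] at h3
    linarith
  have hdxt₀ : dist x (α t₀) ≤ dist x p := by rw [hpt₀]
  -- geodesics from x to α n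
  choose γ hγg hγ0 hγD using fun n : ℕ => hgeo x (α n)
  set Γ : ℕ → ℝ → X :=
    (fun n t => γ n (max 0 (min (t - ((n : ℝ) - dist x (α n))) (dist x (α n))))) with hΓdef
  set bn : ℕ → ℝ := (fun n => (n : ℝ) - dist x (α n)) with hbndef
  have hD0 : ∀ n : ℕ, 0 ≤ dist x (α n) := fun n => dist_nonneg
  have hbn_n : ∀ n : ℕ, bn n ≤ (n : ℝ) := by
    intro n
    simp only [hbndef]
    linarith [hD0 n]
  have hclamp_mem : ∀ n : ℕ, ∀ t : ℝ,
      max 0 (min (t - bn n) (dist x (α n))) ∈ Set.Icc 0 (dist x (α n)) :=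
    fun n t => ⟨le_max_left _ _, max_le (hD0 n) (min_le_right _ _)⟩
  have hΓeq : ∀ n : ℕ, ∀ t : ℝ, Γ n t = γ n (max 0 (min (t - bn n) (dist x (α n)))) := by
    intro n t
    simp only [hΓdef, hbndef]
  have hΓdist0 : ∀ n : ℕ, ∀ u v : ℝ,
      dist (Γ n u) (Γ n v)
        = |max 0 (min (u - bn n) (dist x (α n))) - max 0 (min (v - bn n) (dist x (α n)))| := by
    intro n u v
    rw [hΓeq n u, hΓeq n v]
    exact hγg n _ (hclamp_mem n u) _ (hclamp_mem n v)
  have hΓdist : ∀ n : ℕ, ∀ u v : ℝ, u ≤ (n:ℝ) → v ≤ (n:ℝ) →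
      dist (Γ n u) (Γ n v) = |max 0 (u - bn n) - max 0 (v - bn n)| := by
    intro n u v hu hv
    have h1 : u - bn n ≤ dist x (α n) := by simp only [hbndef]; linarith
    have h2 : v - bn n ≤ dist x (α n) := by simp only [hbndef]; linarith
    rw [hΓdist0 n u v, min_eq_left h1, min_eq_left h2]
  have hΓbn : ∀ n : ℕ, Γ n (bn n) = x := by
    intro n
    rw [hΓeq n (bn n), sub_self, min_eq_left (hD0 n), max_self]
    exact hγ0 n
  have hΓnn : ∀ n : ℕ, Γ n (n : ℝ) = α n := by
    intro n
    have h1 : (n : ℝ) - bn n = dist x (α n) := by simp only [hbndef]; ring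
    rw [hΓeq n (n : ℝ), h1, min_self, max_eq_right (hD0 n)]
    exact hγD n
  have hΓgeod : ∀ n : ℕ, IsGeodesicOn (Γ n) (bn n) (n : ℝ) := by
    intro n u hu v hv
    rw [hΓdist n u v hu.2 hv.2, max_eq_right (by linarith [hu.1] : (0:ℝ) ≤ u - bn n),
      max_eq_right (by linarith [hv.1] : (0:ℝ) ≤ v - bn n),
      show u - bn n - (v - bn n) = u - v by ring]
  -- bounds on bn
  have hbn_ub : ∀ n : ℕ, t₀ ≤ (n:ℝ) → bn n ≤ t₀ + dist x p := by
    intro n hn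
    have hpn : dist p (α n) = (n:ℝ) - t₀ := by
      rw [← hpt₀, hα t₀ (Set.mem_Ici.mpr ht₀0) n (Set.mem_Ici.mpr (Nat.cast_nonneg n)),
        abs_sub_comm, abs_of_nonneg (by linarith)]
    have h1 : dist p (α n) ≤ dist p x + dist x (α n) := dist_triangle p x (α n)
    rw [hpn, dist_comm p x] at h1
    simp only [hbndef]
    linarith
  have hbn_lb : ∀ n : ℕ, t₀ ≤ (n:ℝ) → t₀ - dist x p ≤ bn n := by
    intro n hn
    have hpn : dist p (α n) = (n:ℝ) - t₀ := by
      rw [← hpt₀, hα t₀ (Set.mem_Ici.mpr ht₀0) n (Set.mem_Ici.mpr (Nat.cast_nonneg n)),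
        abs_sub_comm, abs_of_nonneg (by linarith)]
    have h1 : dist x (α n) ≤ dist x p + dist p (α n) := dist_triangle x p (α n)
    rw [hpn] at h1
    simp only [hbndef]
    linarith
  -- the core estimate, specialized
  have core : ∀ n : ℕ, t₀ ≤ (n:ℝ) → ∀ v : ℝ,
      t₀ + dist x p + 3 * Metric.infDist x (α '' Set.Ici 0) ≤ v →
      v + N'.1 5 0 + dist x p + 1 ≤ (n:ℝ) → dist (Γ n v) (α v) ≤ 2 * N'.1 5 0 := by
    intro n hn v hv1 hv2
    exact core_estimate hgeo N' α hα hαM x t₀ (dist x p) ht₀0 hd0 hdxt₀ (bn n) (n : ℝ)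
      (Γ n) (hΓgeod n) (hΓbn n) (hΓnn n) (Nat.cast_nonneg n) (hbn_lb n hn) (hbn_ub n hn)
      v hv1 hv2
  -- ultrafilter limit construction of the ray β
  have hUle : (Filter.hyperfilter ℕ : Filter ℕ) ≤ Filter.atTop := Nat.hyperfilter_le_atTop
  have hUcof : ∀ P : ℕ → Prop, (∀ᶠ m in Filter.atTop, P m) →
      ∀ᶠ m in (Filter.hyperfilter ℕ : Filter ℕ), P m := fun P h => h.filter_mono hUle
  have hbev : ∀ᶠ m in (Filter.hyperfilter ℕ : Filter ℕ),
      bn m ∈ Set.Icc (t₀ - dist x p) (t₀ + dist x p) := by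
    apply hUcof
    obtain ⟨n₀, hn₀⟩ := exists_nat_ge t₀
    filter_upwards [Filter.eventually_ge_atTop n₀] with m hm
    have hmt : t₀ ≤ (m:ℝ) := le_trans hn₀ (Nat.cast_le.mpr hm)
    exact ⟨hbn_lb m hmt, hbn_ub m hmt⟩
  obtain ⟨b, hbmem, hbconv'⟩ :=
    (isCompact_Icc (a := t₀ - dist x p) (b := t₀ + dist x p)).ultrafilter_le_nhds
      ((Filter.hyperfilter ℕ).map bn)
      (by rw [Ultrafilter.coe_map, Filter.le_principal_iff]; exact Filter.mem_map.mpr hbev)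
  have hbconv : Filter.Tendsto bn (Filter.hyperfilter ℕ : Filter ℕ) (nhds b) := by
    rw [Filter.Tendsto, ← Ultrafilter.coe_map]
    exact hbconv'
  have hb_lb : t₀ - dist x p ≤ b := hbmem.1
  -- pointwise ultrafilter limits
  have hβex : ∀ t : ℝ, ∃ y : X,
      Filter.Tendsto (fun m => Γ m t) (Filter.hyperfilter ℕ : Filter ℕ) (nhds y) := by
    intro t
    have hev : ∀ᶠ m in (Filter.hyperfilter ℕ : Filter ℕ),
        Γ m t ∈ Metric.closedBall x (|t| + t₀ + dist x p + 1) := by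
      apply hUcof
      obtain ⟨n₀, hn₀⟩ := exists_nat_ge t₀
      filter_upwards [Filter.eventually_ge_atTop n₀] with m hm
      have hmt : t₀ ≤ (m:ℝ) := le_trans hn₀ (Nat.cast_le.mpr hm)
      have hdd : dist x (Γ m t) = max 0 (min (t - bn m) (dist x (α m))) := by
        have h0 := hΓdist0 m (bn m) t
        rw [hΓbn m, sub_self, min_eq_left (hD0 m), max_self, zero_sub, abs_neg] at h0
        rw [h0]
        exact abs_of_nonneg (le_max_left _ _)
      rw [Metric.mem_closedBall, dist_comm, hdd]
      apply max_le
      · have := abs_nonneg t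
        linarith
      · have h1 : min (t - bn m) (dist x (α m)) ≤ t - bn m := min_le_left _ _
        have h2 : t₀ - dist x p ≤ bn m := hbn_lb m hmt
        have h3 : t ≤ |t| := le_abs_self t
        linarith
    obtain ⟨y, _, hy2⟩ := (isCompact_closedBall x (|t| + t₀ + dist x p + 1)).ultrafilter_le_nhds
      ((Filter.hyperfilter ℕ).map (fun m => Γ m t))
      (by rw [Ultrafilter.coe_map, Filter.le_principal_iff]; exact Filter.mem_map.mpr hev)
    refine ⟨y, ?_⟩
    rw [Filter.Tendsto, ← Ultrafilter.coe_map]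
    exact hy2
  choose β hβ using hβex
  -- β is a geodesic ray on [b, ∞)
  have hray : IsGeodesicRay b β := by
    intro u hu' v hv'
    have hu : b ≤ u := Set.mem_Ici.mp hu'
    have hv : b ≤ v := Set.mem_Ici.mp hv'
    have hdistt : Filter.Tendsto (fun m => dist (Γ m u) (Γ m v))
        (Filter.hyperfilter ℕ : Filter ℕ) (nhds (dist (β u) (β v))) := (hβ u).dist (hβ v)
    have h1 : Filter.Tendsto (fun m => max 0 (u - bn m)) (Filter.hyperfilter ℕ : Filter ℕ)
        (nhds (max 0 (u - b))) := tendsto_const_nhds.max (tendsto_const_nhds.sub hbconv)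
    have h2 : Filter.Tendsto (fun m => max 0 (v - bn m)) (Filter.hyperfilter ℕ : Filter ℕ)
        (nhds (max 0 (v - b))) := tendsto_const_nhds.max (tendsto_const_nhds.sub hbconv)
    have hval := (h1.sub h2).abs
    have heq : (fun m => dist (Γ m u) (Γ m v)) =ᶠ[(Filter.hyperfilter ℕ : Filter ℕ)]
        (fun m => |max 0 (u - bn m) - max 0 (v - bn m)|) := by
      apply hUcof
      obtain ⟨n₀, hn₀⟩ := exists_nat_ge (max u v)
      filter_upwards [Filter.eventually_ge_atTop n₀] with m hm
      have hmu : u ≤ (m:ℝ) := le_trans (le_trans (le_max_left u v) hn₀) (Nat.cast_le.mpr hm)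
      have hmv : v ≤ (m:ℝ) := le_trans (le_trans (le_max_right u v) hn₀) (Nat.cast_le.mpr hm)
      exact hΓdist m u v hmu hmv
    have hfin := tendsto_nhds_unique hdistt (Filter.Tendsto.congr' heq.symm hval)
    rw [hfin, max_eq_right (by linarith : (0:ℝ) ≤ u - b),
      max_eq_right (by linarith : (0:ℝ) ≤ v - b),
      show u - b - (v - b) = u - v by ring]
  -- β b = x
  have hβb : β b = x := by
    have hdistt : Filter.Tendsto (fun m => dist (Γ m b) x)
        (Filter.hyperfilter ℕ : Filter ℕ) (nhds (dist (β b) x)) :=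
      (hβ b).dist tendsto_const_nhds
    have hval : Filter.Tendsto (fun m => max 0 (b - bn m)) (Filter.hyperfilter ℕ : Filter ℕ)
        (nhds (max 0 (b - b))) := tendsto_const_nhds.max (tendsto_const_nhds.sub hbconv)
    have heq : (fun m => dist (Γ m b) x) =ᶠ[(Filter.hyperfilter ℕ : Filter ℕ)]
        (fun m => max 0 (b - bn m)) := by
      apply hUcof
      obtain ⟨n₀, hn₀⟩ := exists_nat_ge b
      filter_upwards [Filter.eventually_ge_atTop n₀] with m hm
      have hmb : b ≤ (m:ℝ) := le_trans hn₀ (Nat.cast_le.mpr hm)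
      rw [← hΓbn m, hΓdist m b (bn m) hmb (hbn_n m), sub_self, max_self, sub_zero,
        abs_of_nonneg (le_max_left _ _)]
    have h0 : dist (β b) x = max 0 (b - b) :=
      tendsto_nhds_unique hdistt (Filter.Tendsto.congr' heq.symm hval)
    rw [sub_self, max_self] at h0
    exact dist_eq_zero.mp h0
  -- assemble the horoball membership
  refine ⟨b, by linarith, β, hray, hβb,
    t₀ + dist x p + 3 * Metric.infDist x (α '' Set.Ici 0), ?_⟩
  intro t ht
  have hdistt : Filter.Tendsto (fun m => dist (α t) (Γ m t))
      (Filter.hyperfilter ℕ : Filter ℕ) (nhds (dist (α t) (β t))) :=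
    tendsto_const_nhds.dist (hβ t)
  have hev : ∀ᶠ m in (Filter.hyperfilter ℕ : Filter ℕ),
      dist (α t) (Γ m t) ≤ 2 * N'.1 5 0 := by
    apply hUcof
    obtain ⟨n₀, hn₀⟩ := exists_nat_ge (max t₀ (t + N'.1 5 0 + dist x p + 1))
    filter_upwards [Filter.eventually_ge_atTop n₀] with m hm
    have h1 : t₀ ≤ (m:ℝ) := le_trans (le_trans (le_max_left _ _) hn₀) (Nat.cast_le.mpr hm)
    have h2 : t + N'.1 5 0 + dist x p + 1 ≤ (m:ℝ) :=
      le_trans (le_trans (le_max_right _ _) hn₀) (Nat.cast_le.mpr hm)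
    rw [dist_comm]
    exact core m h1 t ht h2
  have hfin := le_of_tendsto hdistt hev
  linarith
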